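/- arXiv:2209.05158 — 4 statements merged into one kernel-verified Lean document; each statement's English description precedes it below -/
import Mathlib

section
/- Let f : ℝⁿ → ℝ be a smooth convex function with f(0) = 0 < f(x) for all x ≠ 0 and such that x ↦ f(x) − λ|x|²/2 is convex for some λ > 0. If y = df(x₀) for some x₀ ∈ ℝⁿ with y ≠ 0, then |f*(y)| ≤ (1 + 2|x₀|)·sup_{|x| ≤ |x₀|+1} |f(x)| and |y| ≤ 2·sup_{|x| ≤ |x₀|+1} |f(x)|, where f* denotes the Legendre transform of f. -/
/-- The Legendre transform (convex conjugate) of `f`. -/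
noncomputable def legendre {n : ℕ} (f : EuclideanSpace ℝ (Fin n) → ℝ)
    (y : EuclideanSpace ℝ (Fin n)) : ℝ :=
  ⨆ x : EuclideanSpace ℝ (Fin n), (inner ℝ y x - f x : ℝ)

open InnerProductSpace

lemma grad_le {n : ℕ} (f : EuclideanSpace ℝ (Fin n) → ℝ)
    (hconv : ConvexOn ℝ Set.univ f) (hd : Differentiable ℝ f)
    (x₀ v : EuclideanSpace ℝ (Fin n)) :
    (inner ℝ (gradient f x₀) v : ℝ) ≤ f (x₀ + v) - f x₀ := by
  set A : ℝ →ᵃ[ℝ] EuclideanSpace ℝ (Fin n) := AffineMap.lineMap x₀ (x₀ + v)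
  have hA : ∀ t : ℝ, A t = x₀ + t • v := by
    intro t
    simp [A, AffineMap.lineMap_apply, smul_sub]
    abel
  have hg : ConvexOn ℝ Set.univ (f ∘ A) := by
    have := hconv.comp_affineMap A
    simpa using this
  have hc : HasDerivAt (fun t : ℝ => x₀ + t • v) v 0 := by
    simpa using ((hasDerivAt_id (0:ℝ)).smul_const v).const_add x₀
  have hF : HasFDerivAt f (toDual ℝ _ (gradient f x₀)) x₀ := by
    have := (hd x₀).hasGradientAt
    rwa [hasGradientAt_iff_hasFDerivAt] at this
  have hderiv : HasDerivAt (f ∘ A) (inner ℝ (gradient f x₀) v : ℝ) 0 := by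
    have : HasDerivAt (fun t : ℝ => f (x₀ + t • v)) (toDual ℝ _ (gradient f x₀) v) 0 := by
      have hF' : HasFDerivAt f (toDual ℝ _ (gradient f x₀)) (x₀ + (0:ℝ) • v) := by
        simpa using hF
      exact hF'.comp_hasDerivAt (0:ℝ) hc
    simp only [toDual_apply_apply] at this
    convert this using 2 with t
    simp [Function.comp, hA]
  have := hg.le_slope_of_hasDerivAt (Set.mem_univ (0:ℝ)) (Set.mem_univ (1:ℝ))
    zero_lt_one hderiv
  rw [slope_def_field] at this
  have h0 : (f ∘ A) 0 = f x₀ := by simp [Function.comp, hA]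
  have h1 : (f ∘ A) 1 = f (x₀ + v) := by simp [Function.comp, hA]
  simp only [h0, h1] at this
  simpa using this

/-- bounds on the Legendre transform and the gradient. -/
theorem stmt1 {n : ℕ} (f : EuclideanSpace ℝ (Fin n) → ℝ)
    (hf : ContDiff ℝ (⊤ : ℕ∞) f) (hconv : ConvexOn ℝ Set.univ f)
    (hf0 : f 0 = 0) (hfpos : ∀ x, x ≠ 0 → 0 < f x)
    (lam : ℝ) (hlam : 0 < lam)
    (hlconv : ConvexOn ℝ Set.univ (fun x => f x - lam * ‖x‖ ^ 2 / 2))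
    (x₀ : EuclideanSpace ℝ (Fin n)) (y : EuclideanSpace ℝ (Fin n))
    (hy : y = gradient f x₀) (hy0 : y ≠ 0) :
    |legendre f y| ≤ (1 + 2 * ‖x₀‖) *
        sSup ((fun x => |f x|) '' Metric.closedBall 0 (‖x₀‖ + 1)) ∧
      ‖y‖ ≤ 2 * sSup ((fun x => |f x|) '' Metric.closedBall 0 (‖x₀‖ + 1)) := by
  have hd : Differentiable ℝ f := hf.differentiable (by simp)
  set M : ℝ := sSup ((fun x => |f x|) '' Metric.closedBall 0 (‖x₀‖ + 1)) with hM
  -- bound by M on the ball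
  have hbdd : BddAbove ((fun x => |f x|) '' Metric.closedBall 0 (‖x₀‖ + 1)) :=
    ((isCompact_closedBall _ _).image (by fun_prop)).bddAbove
  have hmem : ∀ x : EuclideanSpace ℝ (Fin n), ‖x‖ ≤ ‖x₀‖ + 1 → |f x| ≤ M := by
    intro x hx
    apply le_csSup hbdd
    exact ⟨x, by simpa [Metric.mem_closedBall, dist_eq_norm] using hx, rfl⟩
  have hx₀mem : |f x₀| ≤ M := hmem x₀ (by linarith)
  have hM0 : 0 ≤ M := le_trans (abs_nonneg _) hx₀mem
  -- the key gradient inequality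
  have key : ∀ x : EuclideanSpace ℝ (Fin n),
      (inner ℝ y x : ℝ) - f x ≤ (inner ℝ y x₀ : ℝ) - f x₀ := by
    intro x
    have := grad_le f hconv hd x₀ (x - x₀)
    rw [← hy] at this
    rw [inner_sub_right] at this
    have h2 : x₀ + (x - x₀) = x := by abel
    rw [h2] at this
    linarith
  -- norm bound on y
  have hynorm : ‖y‖ ≤ 2 * M := by
    set u : EuclideanSpace ℝ (Fin n) := ‖y‖⁻¹ • y
    have hu : ‖u‖ = 1 := by
      simp [u, norm_smul, abs_of_nonneg (inv_nonneg.2 (norm_nonneg y)),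
        inv_mul_cancel₀ (norm_ne_zero_iff.2 hy0)]
    have h1 : (inner ℝ y u : ℝ) = ‖y‖ := by
      rw [real_inner_smul_right, real_inner_self_eq_norm_sq]
      field_simp [norm_ne_zero_iff.2 hy0]
    have h2 : (inner ℝ y u : ℝ) ≤ f (x₀ + u) - f x₀ := by
      have := grad_le f hconv hd x₀ u
      rwa [← hy] at this
    have h3 : f (x₀ + u) ≤ M := by
      have := hmem (x₀ + u) (le_trans (norm_add_le _ _) (by rw [hu]))
      exact le_trans (le_abs_self _) this
    have h4 : -M ≤ f x₀ := by
      have := hx₀mem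
      rw [abs_le] at this; exact this.1
    linarith [h1 ▸ h2]
  refine ⟨?_, hynorm⟩
  -- compute legendre f y
  have hleg : legendre f y = (inner ℝ y x₀ : ℝ) - f x₀ := by
    apply le_antisymm
    · exact ciSup_le key
    · exact le_ciSup ⟨(inner ℝ y x₀ : ℝ) - f x₀, Set.forall_mem_range.2 key⟩ x₀
  rw [hleg]
  have h5 : |(inner ℝ y x₀ : ℝ) - f x₀| ≤ ‖y‖ * ‖x₀‖ + |f x₀| := by
    calc |(inner ℝ y x₀ : ℝ) - f x₀| ≤ |(inner ℝ y x₀ : ℝ)| + |f x₀| := abs_sub _ _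
    _ ≤ ‖y‖ * ‖x₀‖ + |f x₀| := by
        gcongr; exact abs_real_inner_le_norm y x₀
  have h6 : ‖y‖ * ‖x₀‖ ≤ 2 * M * ‖x₀‖ := by
    apply mul_le_mul_of_nonneg_right hynorm (norm_nonneg _)
  calc |(inner ℝ y x₀ : ℝ) - f x₀| ≤ ‖y‖ * ‖x₀‖ + |f x₀| := h5
  _ ≤ 2 * M * ‖x₀‖ + M := by linarith
  _ = (1 + 2 * ‖x₀‖) * M := by ring
end

section
/- Let f : ℝⁿ → ℝ be a smooth convex function with f(0) = 0 ≤ f and with x ↦ f(x) − λ|x|²/2 convex for some λ > 0, and let R > 0. If y ∈ ℝⁿ, y ≠ 0, satisfies f*(y) ≤ (1+2R)·sup_{|x| ≤ R+1} |f(x)|, then |y| ≤ 2·sup_{|x| ≤ R+1} |f(x)|. -/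
/-- if `f*(y) ≤ (1+2R)·sup_{|x|≤R+1}|f(x)|` then `|y| ≤ 2·sup_{|x|≤R+1}|f(x)|`. -/
theorem stmt2 {n : ℕ} (f : EuclideanSpace ℝ (Fin n) → ℝ)
    (hf : ContDiff ℝ (⊤ : ℕ∞) f) (hconv : ConvexOn ℝ Set.univ f)
    (hf0 : f 0 = 0) (hfnn : ∀ x, 0 ≤ f x)
    (lam : ℝ) (hlam : 0 < lam)
    (hlconv : ConvexOn ℝ Set.univ (fun x => f x - lam * ‖x‖ ^ 2 / 2))
    (R : ℝ) (hR : 0 < R)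
    (y : EuclideanSpace ℝ (Fin n)) (hy0 : y ≠ 0)
    (hy : legendre f y ≤ (1 + 2 * R) * sSup ((fun x => |f x|) '' Metric.closedBall 0 (R + 1))) :
    ‖y‖ ≤ 2 * sSup ((fun x => |f x|) '' Metric.closedBall 0 (R + 1)) := by
  set M := sSup ((fun x => |f x|) '' Metric.closedBall (0 : EuclideanSpace ℝ (Fin n)) (R + 1))
    with hMdef
  -- strong convexity lower bound: f x ≥ lam ‖x‖²/2
  have key : ∀ x : EuclideanSpace ℝ (Fin n), lam * ‖x‖ ^ 2 / 2 ≤ f x := by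
    intro x
    by_contra h
    push_neg at h
    have hx0 : x ≠ (0 : EuclideanSpace ℝ (Fin n)) := by
      rintro rfl
      simp [hf0] at h
    have hxn : (0:ℝ) < ‖x‖ := norm_pos_iff.mpr hx0
    obtain ⟨c, hc⟩ : ∃ c, c = lam * ‖x‖ ^ 2 / 2 - f x := ⟨_, rfl⟩
    have hcpos : 0 < c := by rw [hc]; linarith
    obtain ⟨t, ht⟩ : ∃ t, t = min 1 (c / (lam * ‖x‖ ^ 2)) := ⟨_, rfl⟩
    have htpos : 0 < t := by
      rw [ht]; exact lt_min one_pos (div_pos hcpos (by positivity))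
    have ht1 : t ≤ 1 := by rw [ht]; exact min_le_left _ _
    have ht2 : t ≤ c / (lam * ‖x‖ ^ 2) := by rw [ht]; exact min_le_right _ _
    have hci := hlconv.2 (Set.mem_univ x) (Set.mem_univ (0 : EuclideanSpace ℝ (Fin n)))
      htpos.le (by linarith : (0:ℝ) ≤ 1 - t) (by ring)
    have e1 : f x - lam * ‖x‖ ^ 2 / 2 = -c := by rw [hc]; ring
    simp only [smul_zero, add_zero, hf0, smul_eq_mul, norm_zero, e1] at hci
    have hnorm : ‖t • x‖ = t * ‖x‖ := by
      rw [norm_smul, Real.norm_eq_abs, abs_of_pos htpos]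
    rw [hnorm] at hci
    have hfx := hfnn (t • x)
    have ht3 : t * (lam * ‖x‖ ^ 2) ≤ c := by
      calc t * (lam * ‖x‖ ^ 2) ≤ c / (lam * ‖x‖ ^ 2) * (lam * ‖x‖ ^ 2) :=
            mul_le_mul_of_nonneg_right ht2 (by positivity)
        _ = c := by field_simp
    nlinarith [mul_le_mul_of_nonneg_left ht3 htpos.le, mul_pos htpos hcpos]
  -- boundedness of the family defining the Legendre transform
  have hbdd : BddAbove (Set.range fun x : EuclideanSpace ℝ (Fin n) =>
      (inner ℝ y x - f x : ℝ)) := by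
    refine ⟨‖y‖ ^ 2 / (2 * lam), ?_⟩
    rintro _ ⟨x, rfl⟩
    have h1 : (inner ℝ y x : ℝ) ≤ ‖y‖ * ‖x‖ := real_inner_le_norm y x
    have h2 := key x
    show (inner ℝ y x : ℝ) - f x ≤ ‖y‖ ^ 2 / (2 * lam)
    rw [le_div_iff₀ (by positivity)]
    nlinarith [sq_nonneg (‖y‖ - lam * ‖x‖)]
  -- bounds on M
  have hcomp : IsCompact (Metric.closedBall (0 : EuclideanSpace ℝ (Fin n)) (R + 1)) :=
    isCompact_closedBall _ _
  have hbddM : BddAbove ((fun x => |f x|) '' Metric.closedBall (0 : EuclideanSpace ℝ (Fin n)) (R + 1)) :=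
    hcomp.bddAbove_image (hf.continuous.abs.continuousOn)
  have hM0 : 0 ≤ M := by
    have : |f 0| ≤ M := le_csSup hbddM ⟨0, by simp; linarith, rfl⟩
    simpa [hf0] using this
  -- test point
  have hyn : (0:ℝ) < ‖y‖ := norm_pos_iff.mpr hy0
  set x₀ : EuclideanSpace ℝ (Fin n) := ((R + 1) * ‖y‖⁻¹) • y with hx₀
  have hnx₀ : ‖x₀‖ = R + 1 := by
    rw [hx₀, norm_smul, Real.norm_eq_abs, abs_of_pos (by positivity)]
    field_simp
  have hmem : x₀ ∈ Metric.closedBall (0 : EuclideanSpace ℝ (Fin n)) (R + 1) := by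
    simp [Metric.mem_closedBall, dist_zero_right, hnx₀]
  have hfx₀ : f x₀ ≤ M := by
    have : |f x₀| ≤ M := le_csSup hbddM ⟨x₀, hmem, rfl⟩
    rwa [abs_of_nonneg (hfnn x₀)] at this
  have hinner : (inner ℝ y x₀ : ℝ) = (R + 1) * ‖y‖ := by
    rw [hx₀, real_inner_smul_right, real_inner_self_eq_norm_sq]
    field_simp
  have hleg : (R + 1) * ‖y‖ - f x₀ ≤ legendre f y := by
    rw [legendre, ← hinner]
    exact le_ciSup hbdd x₀
  have : (R + 1) * ‖y‖ - M ≤ (1 + 2 * R) * M := by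
    calc (R + 1) * ‖y‖ - M ≤ (R + 1) * ‖y‖ - f x₀ := by linarith
      _ ≤ legendre f y := hleg
      _ ≤ (1 + 2 * R) * M := hy
  nlinarith [mul_pos hR hyn]
end

section
/- Fix integers 1 ≤ i ≤ n−1 and let D^n_i be the set of continuous functions ζ on (0,∞) with support bounded from above such that lim_{t→0} t^{n−i} ζ(t) = 0 and lim_{t→0} ∫_t^∞ ζ(s) s^{n−i−1} ds exists and is finite. For ζ ∈ D^n_i with support contained in (0,R], define ζ^r(t) := ζ(t) for t > r and ζ^r(t) := ζ(r) for 0 ≤ t ≤ r. Then ζ^r is continuous with compact support, belongs to D^n_i with support in (0,R], and ‖ζ − ζ^r‖ → 0 as r → 0, where ‖ζ‖ := sup_{t>0} |(n−i)∫_t^∞ ζ(s)s^{n−i−1}ds| + sup_{t>0} |t^{n−i}ζ(t) + (n−i)∫_t^∞ ζ(s)s^{n−i−1}ds|. -/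
open MeasureTheory Filter

/-- The class `D^n_i`: continuous functions on `(0,∞)` with support bounded from above,
such that `t^{n-i} ζ(t) → 0` as `t → 0` and `∫_t^∞ ζ(s) s^{n-i-1} ds` has a finite limit
as `t → 0`. -/
def Dni (n i : ℕ) (ζ : ℝ → ℝ) : Prop :=
  ContinuousOn ζ (Set.Ioi 0) ∧
  (∃ R : ℝ, ∀ t > R, ζ t = 0) ∧
  Tendsto (fun t : ℝ => t ^ (n - i) * ζ t) (nhdsWithin 0 (Set.Ioi 0)) (nhds 0) ∧
  ∃ L : ℝ, Tendsto (fun t : ℝ => ∫ s in Set.Ioi t, ζ s * s ^ (n - i - 1))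
    (nhdsWithin 0 (Set.Ioi 0)) (nhds L)

/-- The norm `‖ζ‖` on `D^n_i`. -/
noncomputable def dnorm (n i : ℕ) (ζ : ℝ → ℝ) : ℝ :=
  (⨆ t : Set.Ioi (0:ℝ), |(n - i : ℝ) * ∫ s in Set.Ioi (t:ℝ), ζ s * s ^ (n - i - 1)|) +
  (⨆ t : Set.Ioi (0:ℝ),
    |(t:ℝ) ^ (n - i) * ζ t + (n - i : ℝ) * ∫ s in Set.Ioi (t:ℝ), ζ s * s ^ (n - i - 1)|)

/-!
The truncation `ζ^r = ζ ∘ max r` is continuous on all of `ℝ` and agrees with `ζ` on `[r, ∞)`,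
so `ζ - ζ^r` contributes nothing to the norm at `t ≥ r`. For `t < r`, writing `m = n - i` and
`G t = ∫_t^∞ ζ(s) s^{m-1} ds`, one has
`m ∫_t^∞ (ζ - ζ^r)(s) s^{m-1} ds = m (G t - G r) - ζ(r) (r^m - t^m)`,
so both suprema are controlled by `|t^m ζ(t)|`, `|r^m ζ(r)|` and the oscillation of `G` on
`(0, r]`, which tend to `0` with `r` by the two limits defining `D^n_i`.
-/

open Set

lemma ite_lt_eq_max (ζ : ℝ → ℝ) (r t : ℝ) :
    (if r < t then ζ t else ζ r) = ζ (max r t) := by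
  split_ifs with h
  · rw [max_eq_right h.le]
  · rw [max_eq_left (not_lt.1 h)]

lemma dnorm_nonneg (n i : ℕ) (f : ℝ → ℝ) : 0 ≤ dnorm n i f :=
  add_nonneg (Real.iSup_nonneg fun _ => abs_nonneg _) (Real.iSup_nonneg fun _ => abs_nonneg _)

lemma tendsto_zero_of_forall_eventually_le_mul {α : Type*} {l : Filter α} {u : α → ℝ} {C : ℝ}
    (hu : ∀ x, 0 ≤ u x) (h : ∀ ε > 0, ∀ᶠ x in l, u x ≤ C * ε) : Tendsto u l (nhds 0) := by
  rw [Metric.tendsto_nhds]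
  intro ε hε
  filter_upwards [h (ε / (|C| + 1)) (by positivity)] with x hx
  rw [Real.dist_0_eq_abs, abs_of_nonneg (hu x)]
  calc u x ≤ C * (ε / (|C| + 1)) := hx
    _ ≤ |C| * (ε / (|C| + 1)) := by gcongr; exact le_abs_self C
    _ < ε := by rw [mul_div_assoc', div_lt_iff₀ (by positivity)]; nlinarith [abs_nonneg C]

lemma eventually_forall_Ioc_of_eventually_nhdsGT {P : ℝ → Prop}
    (h : ∀ᶠ t in nhdsWithin 0 (Ioi 0), P t) :
    ∀ᶠ r in nhdsWithin 0 (Ioi 0), ∀ t ∈ Ioc 0 r, P t := by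
  obtain ⟨δ, hδ, hsub⟩ := mem_nhdsGT_iff_exists_Ioo_subset.1 h
  filter_upwards [Ioo_mem_nhdsGT hδ] with r hr t ht
  exact hsub ⟨ht.1, ht.2.trans_lt hr.2⟩

lemma integrableOn_mul_pow_Ioi {f : ℝ → ℝ} {B t : ℝ} (hf : ContinuousOn f (Ioi 0))
    (hB : ∀ s > B, f s = 0) (ht : 0 < t) (k : ℕ) :
    IntegrableOn (fun s => f s * s ^ k) (Ioi t) := by
  rw [← Ioc_union_Ioi_eq_Ioi (le_max_right B t)]
  refine IntegrableOn.union ?_ ?_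
  · exact ((hf.mono fun x hx => ht.trans_le hx.1).mul (continuous_pow k).continuousOn)
      |>.integrableOn_Icc.mono_set Ioc_subset_Icc_self
  · refine integrableOn_zero.congr_fun (fun s hs => ?_) measurableSet_Ioi
    rw [hB s ((le_max_left B t).trans_lt hs), zero_mul]

noncomputable def tailIntegral (ζ : ℝ → ℝ) (k : ℕ) (t : ℝ) : ℝ :=
  ∫ s in Ioi t, ζ s * s ^ k

lemma dnorm_eq_of_sub_eq_succ {n i k : ℕ} (hk : n - i = k + 1) (f : ℝ → ℝ) :
    dnorm n i f = (⨆ t : Ioi (0:ℝ), |(k + 1 : ℝ) * tailIntegral f k t|) +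
      ⨆ t : Ioi (0:ℝ), |(t:ℝ) ^ (k + 1) * f t + (k + 1 : ℝ) * tailIntegral f k t| := by
  have hcast : (n : ℝ) - i = k + 1 := by
    rw [← Nat.cast_sub (by omega : i ≤ n), hk]
    push_cast
    ring
  simp only [dnorm, tailIntegral, hk, hcast, Nat.add_sub_cancel]

section Truncation

variable {ζ : ℝ → ℝ} {R r : ℝ}

lemma continuous_comp_max (hcont : ContinuousOn ζ (Ioi 0)) (hr : 0 < r) :
    Continuous fun t => ζ (max r t) :=
  hcont.comp_continuous (continuous_const.max continuous_id) fun _ => lt_max_of_lt_left hr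

lemma integrableOn_comp_max_mul_pow (hcont : ContinuousOn ζ (Ioi 0))
    (hsupp : ∀ s > R, ζ s = 0) (k : ℕ) {t : ℝ} (ht : 0 < t) (hr : 0 < r) :
    IntegrableOn (fun s => ζ (max r s) * s ^ k) (Ioi t) :=
  integrableOn_mul_pow_Ioi (continuous_comp_max hcont hr).continuousOn
    (fun _ hs => hsupp _ (lt_max_of_lt_right hs)) ht k

lemma setIntegral_comp_max_mul_pow (hcont : ContinuousOn ζ (Ioi 0)) (hsupp : ∀ s > R, ζ s = 0)
    (k : ℕ) {t : ℝ} (ht : 0 < t) (htr : t ≤ r) :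
    ∫ s in Ioi t, ζ (max r s) * s ^ k
      = ζ r * ((r ^ (k + 1) - t ^ (k + 1)) / (k + 1)) + ∫ s in Ioi r, ζ s * s ^ k := by
  have hint := integrableOn_comp_max_mul_pow hcont hsupp k ht (ht.trans_le htr)
  rw [← Ioc_union_Ioi_eq_Ioi htr] at hint ⊢
  rw [setIntegral_union (Ioc_disjoint_Ioi le_rfl) measurableSet_Ioi
    (hint.mono_set subset_union_left) (hint.mono_set subset_union_right)]
  congr 1
  · rw [setIntegral_congr_fun measurableSet_Ioc (g := fun s => ζ r * s ^ k)
      fun s hs => by rw [max_eq_left hs.2], integral_const_mul,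
      ← intervalIntegral.integral_of_le htr, integral_pow]
  · exact setIntegral_congr_fun measurableSet_Ioi fun s hs => by rw [max_eq_right (le_of_lt hs)]

lemma mul_tailIntegral_sub_comp_max (hcont : ContinuousOn ζ (Ioi 0))
    (hsupp : ∀ s > R, ζ s = 0) (k : ℕ) {t : ℝ} (ht : 0 < t) (htr : t ≤ r) :
    (k + 1) * tailIntegral (fun s => ζ s - ζ (max r s)) k t
      = (k + 1) * (tailIntegral ζ k t - tailIntegral ζ k r)
        - ζ r * (r ^ (k + 1) - t ^ (k + 1)) := by
  simp only [tailIntegral, sub_mul]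
  rw [integral_sub (integrableOn_mul_pow_Ioi hcont hsupp ht k)
    (integrableOn_comp_max_mul_pow hcont hsupp k ht (ht.trans_le htr)),
    setIntegral_comp_max_mul_pow hcont hsupp k ht htr]
  field_simp
  ring

lemma tailIntegral_sub_comp_max_of_le (k : ℕ) {t : ℝ} (hrt : r ≤ t) :
    tailIntegral (fun s => ζ s - ζ (max r s)) k t = 0 :=
  setIntegral_eq_zero_of_forall_eq_zero fun s hs => by
    dsimp only
    rw [max_eq_right (hrt.trans (le_of_lt hs)), sub_self, zero_mul]

lemma dni_comp_max {n i : ℕ} (hin : i < n) (hcont : ContinuousOn ζ (Ioi 0))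
    (hsupp : ∀ s > R, ζ s = 0) (hr : 0 < r) : Dni n i fun t => ζ (max r t) := by
  refine ⟨(continuous_comp_max hcont hr).continuousOn,
    ⟨R, fun t ht => hsupp _ (lt_max_of_lt_right ht)⟩, ?_, ?_⟩
  · have h : Tendsto (fun t : ℝ => t ^ (n - i) * ζ (max r t)) (nhds 0)
        (nhds (0 ^ (n - i) * ζ (max r 0))) :=
      ((continuous_pow (n - i)).mul (continuous_comp_max hcont hr)).tendsto 0
    rw [zero_pow (by omega), zero_mul] at h
    exact h.mono_left nhdsWithin_le_nhds
  · have hformula : Continuous fun t : ℝ => ζ r * ((r ^ (n - i - 1 + 1) - t ^ (n - i - 1 + 1))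
        / (n - i - 1 + 1 : ℕ)) + ∫ s in Ioi r, ζ s * s ^ (n - i - 1) := by
      fun_prop
    refine ⟨_, ((hformula.tendsto 0).mono_left nhdsWithin_le_nhds).congr' ?_⟩
    filter_upwards [Ioo_mem_nhdsGT hr] with t ht
    rw [setIntegral_comp_max_mul_pow hcont hsupp _ ht.1 ht.2.le]
    push_cast
    rfl

lemma dnorm_sub_comp_max_le {n i k : ℕ} (hk : n - i = k + 1) (hcont : ContinuousOn ζ (Ioi 0))
    (hsupp : ∀ s > R, ζ s = 0) {L ε : ℝ} (hr : 0 < r)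
    (hG : ∀ t ∈ Ioc 0 r, |tailIntegral ζ k t - L| ≤ ε)
    (hP : ∀ t ∈ Ioc 0 r, |t ^ (k + 1) * ζ t| ≤ ε) :
    dnorm n i (fun t => ζ t - ζ (max r t)) ≤ (4 * k + 7) * ε := by
  have hrε : |r ^ (k + 1) * ζ r| ≤ ε := hP r ⟨hr, le_rfl⟩
  have hε : 0 ≤ ε := (abs_nonneg _).trans hrε
  have hdiff : ∀ t ∈ Ioc 0 r,
      |(k + 1 : ℝ) * (tailIntegral ζ k t - tailIntegral ζ k r)| ≤ 2 * (k + 1) * ε := by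
    intro t ht
    rw [abs_mul, abs_of_pos (by positivity : (0:ℝ) < k + 1),
      show 2 * ((k:ℝ) + 1) * ε = (k + 1) * (2 * ε) by ring]
    gcongr
    calc _ ≤ |tailIntegral ζ k t - L| + |L - tailIntegral ζ k r| := abs_sub_le _ _ _
      _ ≤ ε + ε := by rw [abs_sub_comm L]; exact add_le_add (hG t ht) (hG r ⟨hr, le_rfl⟩)
      _ = 2 * ε := by ring
  rw [dnorm_eq_of_sub_eq_succ hk,
    show (4 * k + 7 : ℝ) * ε = (2 * (k + 1) + 1) * ε + (2 * (k + 1) + 2) * ε by ring]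
  refine add_le_add (Real.iSup_le ?_ (by positivity)) (Real.iSup_le ?_ (by positivity))
  all_goals rintro ⟨t, ht : 0 < t⟩; rcases lt_or_ge t r with htr | hrt
  · have hmono : |ζ r * (r ^ (k + 1) - t ^ (k + 1))| ≤ |r ^ (k + 1) * ζ r| := by
      rw [abs_mul, abs_mul, abs_of_nonneg (sub_nonneg.2 (pow_le_pow_left₀ ht.le htr.le _)),
        abs_of_pos (pow_pos hr _), mul_comm (r ^ (k + 1))]
      gcongr
      exact sub_le_self _ (pow_nonneg ht.le _)
    rw [mul_tailIntegral_sub_comp_max hcont hsupp k ht htr.le]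
    calc _ ≤ _ := abs_sub _ _
      _ ≤ 2 * (k + 1) * ε + ε := add_le_add (hdiff t ⟨ht, htr.le⟩) (hmono.trans hrε)
      _ = _ := by ring
  · rw [tailIntegral_sub_comp_max_of_le k hrt, mul_zero, abs_zero]
    positivity
  · rw [mul_tailIntegral_sub_comp_max hcont hsupp k ht htr.le, max_eq_left htr.le,
      show ∀ a b c d e f : ℝ, a * (b - c) + (d * e - c * (f - a)) = a * b + d * e - f * c by
        intros; ring]
    calc _ ≤ _ := abs_sub _ _
      _ ≤ |t ^ (k + 1) * ζ t| + _ + _ := by gcongr; exact abs_add_le _ _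
      _ ≤ ε + 2 * (k + 1) * ε + ε :=
        add_le_add (add_le_add (hP t ⟨ht, htr.le⟩) (hdiff t ⟨ht, htr.le⟩)) hrε
      _ = _ := by ring
  · rw [tailIntegral_sub_comp_max_of_le k hrt, max_eq_right hrt, sub_self, mul_zero, mul_zero,
      add_zero, abs_zero]
    positivity

end Truncation

theorem stmt3_general (n i : ℕ) (h1 : 1 ≤ i) (h2 : i ≤ n - 1) (R : ℝ)
    (ζ : ℝ → ℝ) (hζ : Dni n i ζ) (hsupp : ∀ t > R, ζ t = 0) :
    (∀ r > (0:ℝ),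
      ContinuousOn (fun t => if r < t then ζ t else ζ r) (Set.Ici 0) ∧
      (∀ t > R, (if r < t then ζ t else ζ r) = 0) ∧
      Dni n i (fun t => if r < t then ζ t else ζ r)) ∧
    Tendsto (fun r : ℝ => dnorm n i (fun t => ζ t - if r < t then ζ t else ζ r))
      (nhdsWithin 0 (Set.Ioi 0)) (nhds 0) := by
  obtain ⟨hcont, -, hP, L, hG⟩ := hζ
  have hk : n - i = n - i - 1 + 1 := by omega
  simp only [ite_lt_eq_max]
  refine ⟨fun r hr => ⟨(continuous_comp_max hcont hr).continuousOn,
    fun t ht => hsupp _ (lt_max_of_lt_right ht), dni_comp_max (by omega) hcont hsupp hr⟩, ?_⟩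
  refine tendsto_zero_of_forall_eventually_le_mul (C := 4 * ((n - i - 1 : ℕ) : ℝ) + 7)
    (fun r => dnorm_nonneg _ _ _) fun ε hε => ?_
  rw [hk] at hP
  have hnear := (hG.eventually (Metric.closedBall_mem_nhds L hε)).and
    (hP.eventually (Metric.closedBall_mem_nhds 0 hε))
  filter_upwards [self_mem_nhdsWithin, eventually_forall_Ioc_of_eventually_nhdsGT hnear]
    with r hr hbounds
  refine dnorm_sub_comp_max_le hk hcont hsupp (L := L) hr (fun t ht => ?_) (fun t ht => ?_)
  · simpa [tailIntegral, Real.dist_eq] using (hbounds t ht).1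
  · simpa [Real.dist_eq] using (hbounds t ht).2

/-- the truncation `ζ^r` is continuous with compact support, belongs to
`D^n_i` with support in `(0,R]`, and `‖ζ − ζ^r‖ → 0` as `r → 0`. -/
theorem stmt3 (n i : ℕ) (h1 : 1 ≤ i) (h2 : i ≤ n - 1) (R : ℝ) (hR : 0 < R)
    (ζ : ℝ → ℝ) (hζ : Dni n i ζ) (hsupp : ∀ t > R, ζ t = 0) :
    (∀ r > (0:ℝ),
      ContinuousOn (fun t => if r < t then ζ t else ζ r) (Set.Ici 0) ∧
      (∀ t > R, (if r < t then ζ t else ζ r) = 0) ∧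
      Dni n i (fun t => if r < t then ζ t else ζ r)) ∧
    Tendsto (fun r : ℝ => dnorm n i (fun t => ζ t - if r < t then ζ t else ζ r))
      (nhdsWithin 0 (Set.Ioi 0)) (nhds 0) :=
  stmt3_general n i h1 h2 R ζ hζ hsupp
end

section
/- Let G_t : ℝⁿ × ℝⁿ → ℝⁿ × ℝⁿ be the map G_t(x,y) = (x, y + tx), and for 0 ≤ i ≤ n let κ_i be the n-form on ℝⁿ × ℝⁿ given by κ_i = (1/(i!(n−i)!)) Σ_{π ∈ S_n} sign(π) dx_{π(1)} ∧ … ∧ dx_{π(n−i)} ∧ dy_{π(n−i+1)} ∧ … ∧ dy_{π(n)}. Then the pullback satisfies G_t^* κ_n = Σ_{i=0}^n t^{n−i} κ_i. -/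
/-!
Expanding every factor `(y + t x)_{π k}` of the product defining `κ_n` over the set `S` of slots
where `t x` is chosen writes `G_t^* κ_n` as `(1/n!) Σ_S t^{|S|} A(S)`, with `A(S)` the alternating
double sum carrying `dx` in the slots of `S`. Relabelling the slots by a permutation multiplies
both signs by the same `±1`, so `A(S)` depends only on `|S|`; the `C(n, m)` sets with `|S| = m`
turn `1/n!` into `1/(m! (n-m)!)`, which is the coefficient of `κ_{n-m}`.
-/

/-- The invariant `n`-form `κ_i` on `ℝⁿ × ℝⁿ`, evaluated on `n` tangent vectors:
`κ_i = (1/(i!(n−i)!)) Σ_{π ∈ S_n} sign(π) dx_{π(1)} ∧ … ∧ dx_{π(n−i)} ∧ dy_{π(n−i+1)} ∧ … ∧ dy_{π(n)}`. -/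
noncomputable def kappa (n i : ℕ) (v : Fin n → (Fin n → ℝ) × (Fin n → ℝ)) : ℝ :=
  (1 / ((Nat.factorial i : ℝ) * (Nat.factorial (n - i) : ℝ))) *
    ∑ π : Equiv.Perm (Fin n), ∑ σ : Equiv.Perm (Fin n),
      ((Equiv.Perm.sign π : ℤ) : ℝ) * ((Equiv.Perm.sign σ : ℤ) : ℝ) *
        ∏ k : Fin n, (if (k : ℕ) < n - i then (v (σ k)).1 (π k) else (v (σ k)).2 (π k))

open Finset Equiv Nat
open scoped Pointwise

section MixedAltSum

variable {ι R : Type*} [Fintype ι] [DecidableEq ι] [CommRing R]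

def mixedAltSum (v : ι → (ι → R) × (ι → R)) (S : Finset ι) : R :=
  ∑ π : Perm ι, ∑ σ : Perm ι, ((Perm.sign π : ℤ) : R) * ((Perm.sign σ : ℤ) : R) *
    ∏ k, if k ∈ S then (v (σ k)).1 (π k) else (v (σ k)).2 (π k)

theorem mixedAltSum_perm_smul (v : ι → (ι → R) × (ι → R)) (S : Finset ι) (ρ : Perm ι) :
    mixedAltSum v (ρ • S) = mixedAltSum v S := by
  have hsign : ((Perm.sign ρ : ℤ) : R) * ((Perm.sign ρ : ℤ) : R) = 1 := by
    rw [← Int.cast_mul, ← Units.val_mul, Int.units_mul_self, Units.val_one, Int.cast_one]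
  have hmem (k : ι) : ρ k ∈ ρ • S ↔ k ∈ S := smul_mem_smul_finset_iff ρ
  refine Fintype.sum_equiv (Equiv.mulRight ρ) _ _ fun π =>
    Fintype.sum_equiv (Equiv.mulRight ρ) _ _ fun σ => ?_
  conv_lhs => rw [← Equiv.prod_comp ρ]
  simp only [coe_mulRight, Perm.sign_mul, Units.val_mul, Int.cast_mul, Perm.mul_apply, hmem]
  rw [mul_mul_mul_comm, hsign, mul_one]

theorem mixedAltSum_congr_card (v : ι → (ι → R) × (ι → R)) {S S' : Finset ι} (h : #S = #S') :
    mixedAltSum v S = mixedAltSum v S' := by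
  have := Set.powersetCard.isPretransitive (α := ι) (n := #S')
  obtain ⟨ρ, hρ⟩ := MulAction.exists_smul_eq (Perm ι)
    (⟨S, h⟩ : Set.powersetCard ι #S') ⟨S', rfl⟩
  have hS : ρ • S = S' := by simpa using congrArg Subtype.val hρ
  rw [← hS, mixedAltSum_perm_smul]

theorem prod_add_mul_eq_sum_powerset (a b : ι → R) (t : R) :
    ∏ k, (b k + t * a k) = ∑ S ∈ univ.powerset, t ^ #S * ∏ k, if k ∈ S then a k else b k := by
  simp_rw [add_comm (b _), Finset.prod_add, prod_ite, prod_mul_distrib, prod_const]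
  refine sum_congr rfl fun S _ => ?_
  rw [mul_assoc, filter_mem_eq_inter, univ_inter, sdiff_eq_filter]

theorem mixedAltSum_shear (v : ι → (ι → R) × (ι → R)) (t : R) :
    mixedAltSum (fun j => ((v j).1, fun m => (v j).2 m + t * (v j).1 m)) ∅ =
      ∑ S ∈ univ.powerset, t ^ #S * mixedAltSum v S := by
  simp only [mixedAltSum, notMem_empty, if_false, prod_add_mul_eq_sum_powerset, mul_sum]
  conv_rhs => rw [sum_comm]; enter [2, π]; rw [sum_comm]
  exact sum_congr rfl fun _ _ => sum_congr rfl fun _ _ => sum_congr rfl fun _ _ => by ring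

end MixedAltSum

theorem sum_powerset_mixedAltSum_eq_sum_range {R : Type*} [CommRing R] {n : ℕ}
    (v : Fin n → (Fin n → R) × (Fin n → R)) (t : R) :
    ∑ S ∈ univ.powerset, t ^ #S * mixedAltSum v S =
      ∑ m ∈ range (n + 1), n.choose m * (t ^ m * mixedAltSum v {k : Fin n | (k : ℕ) < m}) := by
  have hcard (S : Finset (Fin n)) :
      mixedAltSum v S = mixedAltSum v {k : Fin n | (k : ℕ) < #S} :=
    mixedAltSum_congr_card v <| by
      rw [Fin.card_filter_val_lt, min_eq_right (by simpa using card_le_univ S)]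
  rw [sum_congr rfl fun S _ => by rw [hcard S],
    sum_powerset_apply_card fun m => t ^ m * mixedAltSum v {k : Fin n | (k : ℕ) < m}]
  simp only [Finset.card_univ, Fintype.card_fin, nsmul_eq_mul]

theorem kappa_eq_mixedAltSum (n i : ℕ) (v : Fin n → (Fin n → ℝ) × (Fin n → ℝ)) :
    kappa n i v = 1 / ((i ! : ℝ) * (n - i)!) * mixedAltSum v {k : Fin n | (k : ℕ) < n - i} := by
  simp only [kappa, mixedAltSum, mem_filter, mem_univ, true_and]

/-- the pullback of `κ_n` under `G_t(x,y) = (x, y + tx)` satisfies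
`G_t^* κ_n = Σ_{i=0}^n t^{n−i} κ_i`. -/
theorem stmt7 (n : ℕ) (t : ℝ) (v : Fin n → (Fin n → ℝ) × (Fin n → ℝ)) :
    kappa n n (fun j => ((v j).1, fun m => (v j).2 m + t * (v j).1 m)) =
      ∑ i ∈ Finset.range (n + 1), t ^ (n - i) * kappa n i v := by
  have hempty : ({k : Fin n | (k : ℕ) < 0} : Finset (Fin n)) = ∅ := by simp
  -- `sum_range_reflect` reindexes the left side by `m ↦ n - m`, matching the `m`-th term on the right
  rw [kappa_eq_mixedAltSum, Nat.sub_self, factorial_zero, cast_one, mul_one, hempty,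
    mixedAltSum_shear, sum_powerset_mixedAltSum_eq_sum_range, mul_sum, ← sum_range_reflect]
  refine sum_congr rfl fun m hm => ?_
  have hmn : m ≤ n := Nat.lt_succ_iff.mp (mem_range.mp hm)
  rw [Nat.add_sub_cancel, kappa_eq_mixedAltSum, Nat.choose_symm hmn, Nat.cast_choose ℝ hmn]
  field_simp
end
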